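/- With the notation of the paper, for club-many α, the relation R_EF^α is transitive: if II has winning strategies σ₁ in EF^κ_ω(A↾α, B↾α) and σ₂ in EF^κ_ω(B↾α, C↾α), and α is closed under the composition and range/domain coding functions, then II has a winning strategy in EF^κ_ω(A↾α, C↾α). -/

import Mathlib

/-! II composes her two strategies. Round `n` of the game on `(A, C)` is simulated by rounds
`2n`, `2n + 1` of the game on `(A, B)` and round `n` of the game on `(B, C)`. In these, I plays the
set `X_{β_n}` (in both games), the range of II's current reply `f₁` (in the second game) and the
domain of her reply `f₂` (in the first game, round `2n + 1`), each joined to I's previous move in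
that game. Then `f₂ ∘ f₁` covers `X_{β_n}` on both sides, and the union of these answers lies in
the composite of the two partial isomorphisms that II wins. Closure of `α` under `h₃, …, h₆`
keeps all these moves below `α`. -/

open Set Cardinal FirstOrder FirstOrder.Language

variable {L : Language}

/-- A set of pairs `g` is (the graph of) a partial isomorphism between the
structures `A` and `B`: it is functional, injective, and preserves all
relations in both directions. -/
def IsPartialIso (A B : L.Structure Ordinal.{0}) (g : Set (Ordinal × Ordinal)) : Prop :=
  (∀ p ∈ g, ∀ q ∈ g, p.1 = q.1 → p.2 = q.2) ∧
  (∀ p ∈ g, ∀ q ∈ g, p.2 = q.2 → p.1 = q.1) ∧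
  ∀ (n : ℕ) (R : L.Relations n) (v : Fin n → Ordinal × Ordinal), (∀ i, v i ∈ g) →
    (A.RelMap R (fun i => (v i).1) ↔ B.RelMap R (fun i => (v i).2))

/-- The moves of player I up to round `n` (as a list). -/
def histMoves (β : ℕ → Ordinal) (n : ℕ) : List Ordinal := (List.range (n + 1)).map β

/-- Legality of I's move at round `n` in the (unrestricted) game `EF^κ_ω`:
moves are ordinals `< κ` and the chosen sets `X_{β_n}` strictly increase. -/
def ILegalAt (κo : Ordinal) (X : Ordinal → Set Ordinal) (β : ℕ → Ordinal) (n : ℕ) : Prop :=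
  β n < κo ∧ (n = 0 → (X (β 0)).Nonempty) ∧ ∀ m, n = m + 1 → X (β m) ⊂ X (β n)

/-- Legality of II's move at round `n` in the (unrestricted) game `EF^κ_ω`:
the chosen partial functions `f_{θ_n}` strictly increase and cover `X_{β_n}`. -/
def IILegalAt (κo : Ordinal) (X : Ordinal → Set Ordinal)
    (Fp : Ordinal → Set (Ordinal × Ordinal)) (β θ : ℕ → Ordinal) (n : ℕ) : Prop :=
  θ n < κo ∧ X (β n) ⊆ Prod.fst '' Fp (θ n) ∧ X (β n) ⊆ Prod.snd '' Fp (θ n) ∧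
    ∀ m, n = m + 1 → Fp (θ m) ⊂ Fp (θ n)

/-- `σ` is a winning strategy for player II in `EF^κ_ω(A,B)`. -/
def IsWinFull (A B : L.Structure Ordinal) (κo : Ordinal) (X : Ordinal → Set Ordinal)
    (Fp : Ordinal → Set (Ordinal × Ordinal)) (σ : List Ordinal → Ordinal) : Prop :=
  ∀ β : ℕ → Ordinal, (∀ n, ILegalAt κo X β n) →
    (∀ n, IILegalAt κo X Fp β (fun k => σ (histMoves β k)) n) ∧
    IsPartialIso A B (⋃ n, Fp (σ (histMoves β n)))

/-- Legality of I's move at round `n` in the restricted game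
`EF^κ_ω(A↾α, B↾α)` : everything lives below `α`. -/
def ILegalResAt (α : Ordinal) (X : Ordinal → Set Ordinal) (β : ℕ → Ordinal) (n : ℕ) : Prop :=
  β n < α ∧ X (β n) ⊆ Set.Iio α ∧ ∀ m, n = m + 1 → X (β m) ⊆ X (β n)

/-- Legality of II's move at round `n` in the restricted game. -/
def IILegalResAt (α : Ordinal) (X : Ordinal → Set Ordinal)
    (Fp : Ordinal → Set (Ordinal × Ordinal)) (β θ : ℕ → Ordinal) (n : ℕ) : Prop :=
  θ n < α ∧ Fp (θ n) ⊆ (Set.Iio α) ×ˢ (Set.Iio α) ∧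
    X (β n) ⊆ Prod.fst '' Fp (θ n) ∧ X (β n) ⊆ Prod.snd '' Fp (θ n) ∧
    ∀ m, n = m + 1 → Fp (θ m) ⊆ Fp (θ n)

/-- `σ` is a winning strategy for player II in the restricted game
`EF^κ_ω(A↾α, B↾α)`. -/
def IsWinRes (A B : L.Structure Ordinal) (α : Ordinal) (X : Ordinal → Set Ordinal)
    (Fp : Ordinal → Set (Ordinal × Ordinal)) (σ : List Ordinal → Ordinal) : Prop :=
  ∀ β : ℕ → Ordinal, (∀ n, ILegalResAt α X β n) →
    (∀ n, IILegalResAt α X Fp β (fun k => σ (histMoves β k)) n) ∧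
    IsPartialIso A B (⋃ n, Fp (σ (histMoves β n)))

/-- `C ⊆ κ` is club in `κ`. -/
def IsClubIn (κ : Cardinal.{0}) (C : Set Ordinal.{0}) : Prop :=
  C ⊆ Set.Iio κ.ord ∧
  (∀ β < κ.ord, ∃ α ∈ C, β < α) ∧
  ∀ B ⊆ C, B.Nonempty → sSup B < κ.ord → sSup B ∈ C

/-- The enumerations `(X_γ)_{γ<κ}` of `P_κ(κ)` and `(f_γ)_{γ<κ}` of all partial
functions with small domain and range are adequate. -/
def GoodEnum (κ : Cardinal.{0}) (X : Ordinal → Set Ordinal)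
    (Fp : Ordinal → Set (Ordinal × Ordinal)) : Prop :=
  (∀ γ < κ.ord, X γ ⊆ Set.Iio κ.ord ∧ #(X γ) < Cardinal.lift.{1} κ) ∧
  (∀ s : Set Ordinal, s ⊆ Set.Iio κ.ord → #s < Cardinal.lift.{1} κ →
    ∃ γ < κ.ord, X γ = s) ∧
  (∀ γ < κ.ord, Fp γ ⊆ (Set.Iio κ.ord) ×ˢ (Set.Iio κ.ord) ∧ #(Fp γ) < Cardinal.lift.{1} κ ∧
    ∀ p ∈ Fp γ, ∀ q ∈ Fp γ, p.1 = q.1 → p.2 = q.2) ∧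
  (∀ g : Set (Ordinal × Ordinal), g ⊆ (Set.Iio κ.ord) ×ˢ (Set.Iio κ.ord) →
    #g < Cardinal.lift.{1} κ → (∀ p ∈ g, ∀ q ∈ g, p.1 = q.1 → p.2 = q.2) →
    ∃ γ < κ.ord, Fp γ = g)

open SetRel

section Relations

variable {α β γ : Type*} {R : SetRel α β} {S : SetRel β γ}

theorem fst_image_subset_fst_image_comp (h : Prod.snd '' R ⊆ Prod.fst '' S) :
    Prod.fst '' R ⊆ Prod.fst '' (R ○ S) := by
  rintro a ⟨⟨a, b⟩, hab, rfl⟩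
  obtain ⟨⟨b, c⟩, hbc, rfl⟩ := h ⟨_, hab, rfl⟩
  exact ⟨(a, c), ⟨b, hab, hbc⟩, rfl⟩

theorem snd_image_subset_snd_image_comp (h : Prod.fst '' S ⊆ Prod.snd '' R) :
    Prod.snd '' S ⊆ Prod.snd '' (R ○ S) := by
  rintro c ⟨⟨b, c⟩, hbc, rfl⟩
  obtain ⟨⟨a, b⟩, hab, rfl⟩ := h ⟨_, hbc, rfl⟩
  exact ⟨(a, c), ⟨b, hab, hbc⟩, rfl⟩

theorem comp_subset_prod {s : Set α} {t t' : Set β} {u : Set γ} (hR : R ⊆ s ×ˢ t)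
    (hS : S ⊆ t' ×ˢ u) : R ○ S ⊆ s ×ˢ u := by
  rintro ⟨a, c⟩ ⟨b, hab, hbc⟩
  exact ⟨(hR hab).1, (hS hbc).2⟩

end Relations

section PartialIso

variable {A B C : L.Structure Ordinal} {g g' h : Set (Ordinal × Ordinal)}

theorem IsPartialIso.mono (hg : IsPartialIso A B g) (hsub : g' ⊆ g) : IsPartialIso A B g' :=
  ⟨fun p hp q hq => hg.1 p (hsub hp) q (hsub hq), fun p hp q hq => hg.2.1 p (hsub hp) q (hsub hq),
    fun n R v hv => hg.2.2 n R v fun i => hsub (hv i)⟩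

theorem IsPartialIso.comp (hg : IsPartialIso A B g) (hh : IsPartialIso B C h) :
    IsPartialIso A C (g ○ h) := by
  refine ⟨?_, ?_, ?_⟩
  · rintro ⟨a, c⟩ ⟨b, hab, hbc⟩ ⟨a', c'⟩ ⟨b', hab', hbc'⟩ (rfl : a = a')
    exact hh.1 (b, c) hbc (b', c') hbc' (hg.1 _ hab _ hab' rfl)
  · rintro ⟨a, c⟩ ⟨b, hab, hbc⟩ ⟨a', c'⟩ ⟨b', hab', hbc'⟩ (rfl : c = c')
    exact hg.2.1 (a, b) hab (a', b') hab' (hh.2.1 _ hbc _ hbc' rfl)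
  · intro n R v hv
    choose b hab hbc using hv
    exact (hg.2.2 n R (fun i => ((v i).1, b i)) hab).trans
      (hh.2.2 n R (fun i => (b i, (v i).2)) hbc)

end PartialIso

section Moves

variable {M : Type*}

def movesBefore (β : ℕ → M) (n : ℕ) : List M := (List.range n).map β

theorem movesBefore_succ (β : ℕ → M) (n : ℕ) :
    movesBefore β (n + 1) = movesBefore β n ++ [β n] := by
  simp [movesBefore, List.range_succ]

@[simp]
theorem length_movesBefore (β : ℕ → M) (n : ℕ) : (movesBefore β n).length = n := by
  simp [movesBefore]

theorem getLastD_movesBefore_succ (β : ℕ → M) (n : ℕ) (x : M) :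
    (movesBefore β (n + 1)).getLastD x = β n := by
  rw [movesBefore_succ, List.getLastD_concat]

theorem movesBefore_congr {β β' : ℕ → M} {n : ℕ} (h : ∀ k < n, β k = β' k) :
    movesBefore β n = movesBefore β' n :=
  List.map_congr_left fun k hk => h k (List.mem_range.mp hk)

theorem eq_movesBefore_of_isPrefix {H : ℕ → List M} (d : M) (hH : ∀ n, H n <+: H (n + 1))
    (hlen : ∀ k, k < (H (k + 1)).length) (n : ℕ) :
    H n = movesBefore (fun k => (H (k + 1)).getD k d) (H n).length := by
  have hchain : ∀ m n, m ≤ n → H m <+: H n := fun m n hmn => by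
    induction n, hmn using Nat.le_induction with
    | base => exact List.prefix_refl _
    | succ n _ ih => exact ih.trans (hH n)
  refine List.ext_getElem (by simp) fun k hk _ => ?_
  simp only [movesBefore, List.getElem_map, List.getElem_range, List.getD_eq_getElem _ _ (hlen k)]
  rcases le_total n (k + 1) with h | h
  · exact (hchain _ _ h).getElem hk
  · exact ((hchain _ _ h).getElem (hlen k)).symm

end Moves

theorem histMoves_eq_movesBefore (β : ℕ → Ordinal) (n : ℕ) :
    histMoves β n = movesBefore β (n + 1) := rfl

section Games

variable {A B : L.Structure Ordinal} {α : Ordinal} {X : Ordinal → Set Ordinal}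
  {Fp : Ordinal → Set (Ordinal × Ordinal)}

/-- Continue the play by repeating I's move `m`: II's reply in round `m` only sees the first
`m + 1` moves. -/
theorem IsWinRes.iiLegalResAt_of_forall_le {σ : List Ordinal → Ordinal}
    (hσ : IsWinRes A B α X Fp σ) {β : ℕ → Ordinal} {m : ℕ}
    (hβ : ∀ k ≤ m, ILegalResAt α X β k) :
    IILegalResAt α X Fp β (fun k => σ (histMoves β k)) m := by
  set β' : ℕ → Ordinal := fun k => β (min k m)
  have hβ' : ∀ k, ILegalResAt α X β' k := by
    intro k
    refine ⟨(hβ _ (min_le_right k m)).1, (hβ _ (min_le_right k m)).2.1, ?_⟩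
    rintro j rfl
    rcases le_or_gt (j + 1) m with hj | hj
    · simpa [β', min_eq_left hj, min_eq_left (Nat.le_of_succ_le hj)] using (hβ _ hj).2.2 j rfl
    · simp [β', min_eq_right hj.le, min_eq_right (Nat.le_of_lt_succ hj)]
  have hhist : ∀ k ≤ m, histMoves β' k = histMoves β k := fun k hk =>
    movesBefore_congr fun j hj => by simp [β', show j ≤ m by omega]
  obtain ⟨hlt, hsq, hfst, hsnd, hmono⟩ := (hσ β' hβ').1 m
  simp only [hhist m le_rfl] at hlt hsq hfst hsnd hmono
  simp only [β', min_self] at hfst hsnd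
  exact ⟨hlt, hsq, hfst, hsnd, fun j hj => by simpa only [hhist j (by omega)] using hmono j hj⟩

end Games

def IsCodeBelow (α : Ordinal) (X : Ordinal → Set Ordinal) (a : Ordinal) : Prop :=
  a < α ∧ X a ⊆ Iio α

theorem ILegalResAt.isCodeBelow {α : Ordinal} {X : Ordinal → Set Ordinal} {β : ℕ → Ordinal}
    {n : ℕ} (h : ILegalResAt α X β n) : IsCodeBelow α X (β n) :=
  ⟨h.1, h.2.1⟩

/-- Choice functions for the closure of `α` under `h₃, …, h₆`; `comp a b` codes the relational
composite "first `Fp a`, then `Fp b`". -/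
structure CodingFunctions (α : Ordinal) (X : Ordinal → Set Ordinal)
    (Fp : Ordinal → Set (Ordinal × Ordinal)) where
  union : Ordinal → Ordinal → Ordinal
  ran : Ordinal → Ordinal
  dom : Ordinal → Ordinal
  comp : Ordinal → Ordinal → Ordinal
  union_spec : ∀ a b, a < α → b < α → union a b < α ∧ X (union a b) = X a ∪ X b
  ran_spec : ∀ a < α, ran a < α ∧ X (ran a) = Prod.snd '' Fp a
  dom_spec : ∀ a < α, dom a < α ∧ X (dom a) = Prod.fst '' Fp a
  comp_spec : ∀ a b, a < α → b < α → comp a b < α ∧ Fp (comp a b) = Fp a ○ Fp b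

namespace CodingFunctions

variable {A B C : L.Structure Ordinal} {α : Ordinal} {X : Ordinal → Set Ordinal}
  {Fp : Ordinal → Set (Ordinal × Ordinal)}

theorem nonempty_of_closed
    (hUnion : ∀ a b : Ordinal, a < α → b < α → ∃ γ < α, X γ = X a ∪ X b)
    (hRan : ∀ a < α, ∃ γ < α, X γ = Prod.snd '' Fp a)
    (hDom : ∀ a < α, ∃ γ < α, X γ = Prod.fst '' Fp a)
    (hComp : ∀ a b : Ordinal, a < α → b < α → ∃ γ < α,
      Fp γ = {p : Ordinal × Ordinal | ∃ y, (p.1, y) ∈ Fp b ∧ (y, p.2) ∈ Fp a}) :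
    Nonempty (CodingFunctions α X Fp) := by
  choose! u hu using hUnion
  choose! r hr using hRan
  choose! d hd using hDom
  choose! c hc using hComp
  exact ⟨⟨u, r, d, fun a b => c b a, hu, hr, hd, fun a b ha hb => hc b a hb ha⟩⟩

variable (K : CodingFunctions α X Fp)

theorem isCodeBelow_union {a b : Ordinal} (ha : IsCodeBelow α X a) (hb : IsCodeBelow α X b) :
    IsCodeBelow α X (K.union a b) := by
  obtain ⟨hlt, hX⟩ := K.union_spec a b ha.1 hb.1
  exact ⟨hlt, hX ▸ union_subset ha.2 hb.2⟩

theorem isCodeBelow_ran {θ : Ordinal} (hθ : θ < α) (hsub : Fp θ ⊆ Iio α ×ˢ Iio α) :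
    IsCodeBelow α X (K.ran θ) := by
  obtain ⟨hlt, hX⟩ := K.ran_spec θ hθ
  exact ⟨hlt, hX ▸ fun _ ⟨p, hp, hpb⟩ => hpb ▸ (hsub hp).2⟩

theorem isCodeBelow_dom {θ : Ordinal} (hθ : θ < α) (hsub : Fp θ ⊆ Iio α ×ˢ Iio α) :
    IsCodeBelow α X (K.dom θ) := by
  obtain ⟨hlt, hX⟩ := K.dom_spec θ hθ
  exact ⟨hlt, hX ▸ fun _ ⟨p, hp, hpa⟩ => hpa ▸ (hsub hp).1⟩

theorem isCodeBelow_getLastD_movesBefore {b : ℕ → Ordinal} {k : ℕ} {x : Ordinal}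
    (hprev : ∀ i < k, ILegalResAt α X b i) (hx : IsCodeBelow α X x) :
    IsCodeBelow α X ((movesBefore b k).getLastD x) := by
  rcases List.mem_cons.mp List.getLastD_mem_cons with h | h
  · exact h ▸ hx
  · obtain ⟨i, hi, hbi⟩ := List.mem_map.mp h
    exact hbi ▸ (hprev i (List.mem_range.mp hi)).isCodeBelow

theorem iLegalResAt_of_eq_union {b : ℕ → Ordinal} {k : ℕ} {x y : Ordinal}
    (hb : b k = K.union ((movesBefore b k).getLastD x) y)
    (hprev : ∀ i < k, ILegalResAt α X b i) (hx : IsCodeBelow α X x)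
    (hy : IsCodeBelow α X y) : ILegalResAt α X b k := by
  have hlast := isCodeBelow_getLastD_movesBefore hprev hx
  refine ⟨hb ▸ (K.isCodeBelow_union hlast hy).1, hb ▸ (K.isCodeBelow_union hlast hy).2, ?_⟩
  rintro i rfl
  rw [hb, (K.union_spec _ _ hlast.1 hy.1).2, getLastD_movesBefore_succ]
  exact subset_union_left

theorem subset_of_eq_union {b : ℕ → Ordinal} {k : ℕ} {x y : Ordinal}
    (hb : b k = K.union ((movesBefore b k).getLastD x) y)
    (hprev : ∀ i < k, ILegalResAt α X b i) (hx : IsCodeBelow α X x)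
    (hy : IsCodeBelow α X y) : X y ⊆ X (b k) := by
  rw [hb, (K.union_spec _ _ (isCodeBelow_getLastD_movesBefore hprev hx).1 hy.1).2]
  exact subset_union_right

section Simulation

variable (σ₁ σ₂ : List Ordinal → Ordinal)

/-- `s` holds I's moves so far in the games on `(A, B)` and `(B, C)`; one round of the game on
`(A, C)`, with I's move `x`, adds two rounds to the first and one to the second. -/
def simStep (s : List Ordinal × List Ordinal) (x : Ordinal) : List Ordinal × List Ordinal :=
  let a := K.union (s.1.getLastD x) x
  let e := K.union (s.2.getLastD x) (K.union x (K.ran (σ₁ (s.1 ++ [a]))))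
  (s.1 ++ [a, K.union a (K.dom (σ₂ (s.2 ++ [e])))], s.2 ++ [e])

def simulate (l : List Ordinal) : List Ordinal × List Ordinal :=
  l.foldl (K.simStep σ₁ σ₂) ([], [])

def compStrategy (l : List Ordinal) : Ordinal :=
  K.comp (σ₁ (K.simulate σ₁ σ₂ l).1) (σ₂ (K.simulate σ₁ σ₂ l).2)

def play₁ (β : ℕ → Ordinal) (k : ℕ) : Ordinal :=
  (K.simulate σ₁ σ₂ (movesBefore β (k + 1))).1.getD k 0

def play₂ (β : ℕ → Ordinal) (k : ℕ) : Ordinal :=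
  (K.simulate σ₁ σ₂ (movesBefore β (k + 1))).2.getD k 0

theorem simulate_movesBefore_succ (β : ℕ → Ordinal) (n : ℕ) :
    K.simulate σ₁ σ₂ (movesBefore β (n + 1)) =
      K.simStep σ₁ σ₂ (K.simulate σ₁ σ₂ (movesBefore β n)) (β n) := by
  rw [simulate, movesBefore_succ, List.foldl_append, List.foldl_cons, List.foldl_nil]
  rfl

theorem length_simulate_movesBefore (β : ℕ → Ordinal) (n : ℕ) :
    (K.simulate σ₁ σ₂ (movesBefore β n)).1.length = 2 * n ∧
      (K.simulate σ₁ σ₂ (movesBefore β n)).2.length = n := by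
  induction n with
  | zero => exact ⟨rfl, rfl⟩
  | succ n ih =>
    rw [simulate_movesBefore_succ]
    simp only [simStep, List.length_append, ih.1, ih.2]
    exact ⟨by simp only [List.length_cons, List.length_nil]; omega, rfl⟩

theorem simulate_movesBefore (β : ℕ → Ordinal) (n : ℕ) :
    K.simulate σ₁ σ₂ (movesBefore β n) =
      (movesBefore (K.play₁ σ₁ σ₂ β) (2 * n), movesBefore (K.play₂ σ₁ σ₂ β) n) := by
  have hpre : ∀ n, (K.simulate σ₁ σ₂ (movesBefore β n)).1 <+:
        (K.simulate σ₁ σ₂ (movesBefore β (n + 1))).1 ∧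
      (K.simulate σ₁ σ₂ (movesBefore β n)).2 <+: (K.simulate σ₁ σ₂ (movesBefore β (n + 1))).2 :=
    fun n => by
      rw [simulate_movesBefore_succ]
      exact ⟨List.prefix_append _ _, List.prefix_append _ _⟩
  have hlen := K.length_simulate_movesBefore σ₁ σ₂ β
  ext1
  · have h := eq_movesBefore_of_isPrefix 0 (fun n => (hpre n).1)
      (fun k => by rw [(hlen _).1]; omega) n
    rwa [(hlen n).1] at h
  · have h := eq_movesBefore_of_isPrefix 0 (fun n => (hpre n).2)
      (fun k => by rw [(hlen _).2]; omega) n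
    rwa [(hlen n).2] at h

theorem play_eq (β : ℕ → Ordinal) (n : ℕ) :
    K.play₁ σ₁ σ₂ β (2 * n) =
        K.union ((movesBefore (K.play₁ σ₁ σ₂ β) (2 * n)).getLastD (β n)) (β n) ∧
      K.play₂ σ₁ σ₂ β n = K.union ((movesBefore (K.play₂ σ₁ σ₂ β) n).getLastD (β n))
        (K.union (β n) (K.ran (σ₁ (histMoves (K.play₁ σ₁ σ₂ β) (2 * n))))) ∧
      K.play₁ σ₁ σ₂ β (2 * n + 1) =
        K.union (K.play₁ σ₁ σ₂ β (2 * n)) (K.dom (σ₂ (histMoves (K.play₂ σ₁ σ₂ β) n))) := by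
  have h := K.simulate_movesBefore_succ σ₁ σ₂ β n
  rw [simulate_movesBefore, simulate_movesBefore, show 2 * (n + 1) = 2 * n + 1 + 1 by ring,
    movesBefore_succ, movesBefore_succ, movesBefore_succ _ n] at h
  simp only [simStep, Prod.mk.injEq, List.append_assoc, List.singleton_append,
    List.append_cancel_left_eq, List.cons.injEq, and_true] at h
  obtain ⟨⟨h₁, h₂⟩, h₃⟩ := h
  rw [← h₁] at h₂ h₃
  rw [← h₃] at h₂
  simp only [histMoves_eq_movesBefore, movesBefore_succ]
  exact ⟨h₁, h₃, h₂⟩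

theorem compStrategy_histMoves (β : ℕ → Ordinal) (n : ℕ) :
    K.compStrategy σ₁ σ₂ (histMoves β n) =
      K.comp (σ₁ (histMoves (K.play₁ σ₁ σ₂ β) (2 * n + 1)))
        (σ₂ (histMoves (K.play₂ σ₁ σ₂ β) n)) := by
  simp only [compStrategy, histMoves_eq_movesBefore, simulate_movesBefore]
  rfl

end Simulation

variable {σ₁ σ₂ : List Ordinal → Ordinal} {β : ℕ → Ordinal}

/-- Induction on the rounds: each simulated move only uses replies of `σ₁`, `σ₂` to earlier,
already legal, moves. -/
theorem iLegalResAt_play (hβ : ∀ n, ILegalResAt α X β n) (h₁ : IsWinRes A B α X Fp σ₁)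
    (h₂ : IsWinRes B C α X Fp σ₂) :
    (∀ k, ILegalResAt α X (K.play₁ σ₁ σ₂ β) k) ∧ ∀ k, ILegalResAt α X (K.play₂ σ₁ σ₂ β) k := by
  set b₁ := K.play₁ σ₁ σ₂ β
  set b₂ := K.play₂ σ₁ σ₂ β
  have hrounds : ∀ n, (∀ k < 2 * n, ILegalResAt α X b₁ k) ∧ ∀ k < n, ILegalResAt α X b₂ k := by
    intro n
    induction n with
    | zero => exact ⟨fun k hk => absurd hk k.not_lt_zero, fun k hk => absurd hk k.not_lt_zero⟩
    | succ n ih =>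
      obtain ⟨e₁, e₂, e₃⟩ := K.play_eq σ₁ σ₂ β n
      have hx := (hβ n).isCodeBelow
      have hb₁ : ∀ k < 2 * n + 1, ILegalResAt α X b₁ k :=
        Nat.forall_lt_succ_right.mpr ⟨ih.1, K.iLegalResAt_of_eq_union e₁ ih.1 hx hx⟩
      obtain ⟨hθ₁, hsub₁, -⟩ :=
        h₁.iiLegalResAt_of_forall_le (m := 2 * n) fun k hk => hb₁ k (by omega)
      have hb₂ : ∀ k < n + 1, ILegalResAt α X b₂ k :=
        Nat.forall_lt_succ_right.mpr ⟨ih.2, K.iLegalResAt_of_eq_union e₂ ih.2 hx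
          (K.isCodeBelow_union hx (K.isCodeBelow_ran hθ₁ hsub₁))⟩
      obtain ⟨hθ₂, hsub₂, -⟩ := h₂.iiLegalResAt_of_forall_le (m := n) fun k hk => hb₂ k (by omega)
      have e₃' : b₁ (2 * n + 1) = K.union ((movesBefore b₁ (2 * n + 1)).getLastD (β n))
          (K.dom (σ₂ (histMoves b₂ n))) := by
        rw [getLastD_movesBefore_succ]; exact e₃
      refine ⟨Nat.forall_lt_succ_right.mpr
        ⟨hb₁, K.iLegalResAt_of_eq_union e₃' hb₁ hx (K.isCodeBelow_dom hθ₂ hsub₂)⟩, hb₂⟩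
  exact ⟨fun k => (hrounds (k + 1)).1 k (by omega), fun k => (hrounds (k + 1)).2 k (by omega)⟩

theorem subset_X_play (hβ : ∀ n, ILegalResAt α X β n) (h₁ : IsWinRes A B α X Fp σ₁)
    (h₂ : IsWinRes B C α X Fp σ₂) (n : ℕ) :
    X (β n) ⊆ X (K.play₁ σ₁ σ₂ β (2 * n)) ∧ X (β n) ⊆ X (K.play₂ σ₁ σ₂ β n) ∧
      Prod.snd '' Fp (σ₁ (histMoves (K.play₁ σ₁ σ₂ β) (2 * n))) ⊆ X (K.play₂ σ₁ σ₂ β n) ∧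
      Prod.fst '' Fp (σ₂ (histMoves (K.play₂ σ₁ σ₂ β) n)) ⊆ X (K.play₁ σ₁ σ₂ β (2 * n + 1)) := by
  obtain ⟨hb₁, hb₂⟩ := K.iLegalResAt_play hβ h₁ h₂
  obtain ⟨hθ₁, hsub₁, -⟩ := (h₁ _ hb₁).1 (2 * n)
  obtain ⟨hθ₂, hsub₂, -⟩ := (h₂ _ hb₂).1 n
  obtain ⟨e₁, e₂, e₃⟩ := K.play_eq σ₁ σ₂ β n
  have hx := (hβ n).isCodeBelow
  have hran := K.isCodeBelow_ran hθ₁ hsub₁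
  have h₂sub := K.subset_of_eq_union e₂ (fun i _ => hb₂ i) hx (K.isCodeBelow_union hx hran)
  rw [(K.union_spec _ _ hx.1 hran.1).2, (K.ran_spec _ hθ₁).2, union_subset_iff] at h₂sub
  refine ⟨K.subset_of_eq_union e₁ (fun i _ => hb₁ i) hx hx, h₂sub.1, h₂sub.2, ?_⟩
  rw [e₃, (K.union_spec _ _ (hb₁ _).1 (K.dom_spec _ hθ₂).1).2, (K.dom_spec _ hθ₂).2]
  exact subset_union_right

theorem isWinRes_compStrategy (h₁ : IsWinRes A B α X Fp σ₁) (h₂ : IsWinRes B C α X Fp σ₂) :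
    IsWinRes A C α X Fp (K.compStrategy σ₁ σ₂) := by
  intro β hβ
  obtain ⟨hb₁, hb₂⟩ := K.iLegalResAt_play hβ h₁ h₂
  obtain ⟨hθ₁, hiso₁⟩ := h₁ _ hb₁
  obtain ⟨hθ₂, hiso₂⟩ := h₂ _ hb₂
  set f₁ : ℕ → Set (Ordinal × Ordinal) := fun k => Fp (σ₁ (histMoves (K.play₁ σ₁ σ₂ β) k))
  set f₂ : ℕ → Set (Ordinal × Ordinal) := fun k => Fp (σ₂ (histMoves (K.play₂ σ₁ σ₂ β) k))
  have hmono₁ : Monotone f₁ := monotone_nat_of_le_succ fun k => (hθ₁ (k + 1)).2.2.2.2 k rfl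
  have hmono₂ : Monotone f₂ := monotone_nat_of_le_succ fun k => (hθ₂ (k + 1)).2.2.2.2 k rfl
  have hcomp : ∀ n, K.compStrategy σ₁ σ₂ (histMoves β n) < α ∧
      Fp (K.compStrategy σ₁ σ₂ (histMoves β n)) = f₁ (2 * n + 1) ○ f₂ n := fun n => by
    rw [compStrategy_histMoves]
    exact K.comp_spec _ _ (hθ₁ _).1 (hθ₂ n).1
  refine ⟨fun n => ⟨(hcomp n).1, ?_, ?_, ?_, ?_⟩, ?_⟩
  · rw [(hcomp n).2]
    exact comp_subset_prod (hθ₁ _).2.1 (hθ₂ n).2.1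
  · obtain ⟨hX₁, -, hran₁, -⟩ := K.subset_X_play hβ h₁ h₂ n
    rw [(hcomp n).2]
    calc X (β n) ⊆ Prod.fst '' f₁ (2 * n) := hX₁.trans (hθ₁ _).2.2.1
      _ ⊆ Prod.fst '' (f₁ (2 * n) ○ f₂ n) :=
        fst_image_subset_fst_image_comp (hran₁.trans (hθ₂ n).2.2.1)
      _ ⊆ Prod.fst '' (f₁ (2 * n + 1) ○ f₂ n) :=
        image_mono (comp_subset_comp_left (hmono₁ (Nat.le_succ _)))
  · obtain ⟨-, hX₂, -, hdom₂⟩ := K.subset_X_play hβ h₁ h₂ n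
    rw [(hcomp n).2]
    exact (hX₂.trans (hθ₂ n).2.2.2.1).trans
      (snd_image_subset_snd_image_comp (hdom₂.trans (hθ₁ _).2.2.2.1))
  · rintro m rfl
    rw [(hcomp m).2, (hcomp (m + 1)).2]
    exact comp_subset_comp (hmono₁ (by omega)) (hmono₂ (Nat.le_succ m))
  · refine (hiso₁.comp hiso₂).mono (iUnion_subset fun n => ?_)
    rw [(hcomp n).2]
    exact comp_subset_comp (subset_iUnion f₁ _) (subset_iUnion f₂ _)

end CodingFunctions

theorem REF_transitive_general
    (L : Language) (A B C : L.Structure Ordinal)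
    (X : Ordinal → Set Ordinal) (Fp : Ordinal → Set (Ordinal × Ordinal))
    (α : Ordinal)
    -- `α` is closed under `h₃` (union of the coded sets):
    (hUnion : ∀ a b : Ordinal, a < α → b < α → ∃ γ < α, X γ = X a ∪ X b)
    -- `α` is closed under `h₄` (range of the coded partial functions):
    (hRan : ∀ a < α, ∃ γ < α, X γ = Prod.snd '' Fp a)
    -- `α` is closed under `h₅` (domain of the coded partial functions):
    (hDom : ∀ a < α, ∃ γ < α, X γ = Prod.fst '' Fp a)
    -- `α` is closed under `h₆` (composition of the coded partial functions):
    (hComp : ∀ a b : Ordinal, a < α → b < α → ∃ γ < α,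
      Fp γ = {p : Ordinal × Ordinal | ∃ y, (p.1, y) ∈ Fp b ∧ (y, p.2) ∈ Fp a})
    (σ₁ σ₂ : List Ordinal → Ordinal)
    (h₁ : IsWinRes A B α X Fp σ₁) (h₂ : IsWinRes B C α X Fp σ₂) :
    ∃ σ, IsWinRes A C α X Fp σ := by
  obtain ⟨K⟩ := CodingFunctions.nonempty_of_closed hUnion hRan hDom hComp
  exact ⟨K.compStrategy σ₁ σ₂, K.isWinRes_compStrategy h₁ h₂⟩

/-- Transitivity step for `R_EF^α`, for `α` closed under the coding functions:
if II has winning strategies in `EF^κ_ω(A↾α, B↾α)` and `EF^κ_ω(B↾α, C↾α)`, and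
`α` is closed under the functions coding unions, ranges, domains and
compositions of the enumerated sets and partial functions, then II has a
winning strategy in `EF^κ_ω(A↾α, C↾α)`. -/
theorem REF_transitive (κ : Cardinal.{0}) (hκ : κ.IsRegular) (hκω : ℵ₀ < κ)
    (L : Language) (A B C : L.Structure Ordinal)
    (X : Ordinal → Set Ordinal) (Fp : Ordinal → Set (Ordinal × Ordinal))
    (hEnum : GoodEnum κ X Fp)
    (α : Ordinal) (hα : α < κ.ord)
    -- `α` is closed under `h₃` (union of the coded sets):
    (hUnion : ∀ a b : Ordinal, a < α → b < α → ∃ γ < α, X γ = X a ∪ X b)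
    -- `α` is closed under `h₄` (range of the coded partial functions):
    (hRan : ∀ a < α, ∃ γ < α, X γ = Prod.snd '' Fp a)
    -- `α` is closed under `h₅` (domain of the coded partial functions):
    (hDom : ∀ a < α, ∃ γ < α, X γ = Prod.fst '' Fp a)
    -- `α` is closed under `h₆` (composition of the coded partial functions):
    (hComp : ∀ a b : Ordinal, a < α → b < α → ∃ γ < α,
      Fp γ = {p : Ordinal × Ordinal | ∃ y, (p.1, y) ∈ Fp b ∧ (y, p.2) ∈ Fp a})
    (σ₁ σ₂ : List Ordinal → Ordinal)
    (h₁ : IsWinRes A B α X Fp σ₁) (h₂ : IsWinRes B C α X Fp σ₂) :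
    ∃ σ, IsWinRes A C α X Fp σ :=
  REF_transitive_general L A B C X Fp α hUnion hRan hDom hComp σ₁ σ₂ h₁ h₂
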